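/- For the l=1 stochastic S-matrix weights given by formula (25), the column sums equal 1: for fixed input (ε_j, β) with β_0 + ... + β_n = m, the sum over outputs k of the weight S(z)_{ε_j,β}^{ε_k,δ} (with δ = ε_j + β - ε_k) equals 1. Concretely, for k = j the weight is q^{2β_{[j,n]}-m+1}(1 - q^{-2β_j+m-1}z)/(q^{m+1}-z); for k < j with β_k ≥ 1 it is -q^{2β_{[k+1,n]}-m+1}(1-q^{2β_k})/(q^{m+1}-z); for k > j with β_k ≥ 1 it is -q^{2β_{[k+1,n]}}z(1-q^{2β_k})/(q^{m+1}-z); and these sum to 1. -/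

import Mathlib

/-!
Every weight is a difference `(F k - F (k + 1)) / (q ^ (m + 1) - z)` of consecutive values of
the potential `F k = q ^ (2 β_{[k,n]} - m + 1)` for `k ≤ j` and `F k = z q ^ (2 β_{[k,n]})` for
`k > j`, so the column sum telescopes to `(F 0 - F (n + 1)) / (q ^ (m + 1) - z)`, and
`F 0 = q ^ (m + 1)`, `F (n + 1) = z` because `β_{[0,n]} = m`.
-/

open Finset

namespace Fin

variable {M : Type*} [AddCommMonoid M] {n : ℕ} (f : Fin n → M)

def tailSum (k : ℕ) : M := ∑ i : Fin n with k ≤ i.val, f i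

theorem tailSum_zero : tailSum f 0 = ∑ i, f i := by
  simp [tailSum]

theorem tailSum_of_le {k : ℕ} (hk : n ≤ k) : tailSum f k = 0 :=
  sum_eq_zero fun i hi => absurd (mem_filter.mp hi).2 (by have := i.isLt; omega)

theorem sum_Ici_eq_tailSum (k : Fin n) : ∑ i ∈ Ici k, f i = tailSum f k := by
  refine sum_congr (Finset.ext fun i => ?_) fun _ _ => rfl
  simp only [mem_Ici, mem_filter, mem_univ, true_and, Fin.le_def]

theorem sum_Ioi_eq_tailSum (k : Fin n) : ∑ i ∈ Ioi k, f i = tailSum f (k + 1) := by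
  refine sum_congr (Finset.ext fun i => ?_) fun _ _ => rfl
  simp only [mem_Ioi, mem_filter, mem_univ, true_and, Fin.lt_def, Nat.succ_le_iff]

theorem tailSum_eq_add_tailSum_succ (k : Fin n) : tailSum f k = f k + tailSum f (k + 1) := by
  rw [← sum_Ici_eq_tailSum, ← sum_Ioi_eq_tailSum, add_sum_Ioi_eq_sum_Ici]

end Fin

section Weights

variable {K : Type*} [Field K] {q : K} (hq : q ≠ 0) (z : K) (m : ℕ) (b s : ℤ)
include hq

theorem zpow_mul_one_sub_zpow_neg_mul :
    q ^ (2 * (b + s) - m + 1) * (1 - q ^ (-(2 * b) + m - 1) * z) =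
      q ^ (2 * (b + s) - m + 1) - z * q ^ (2 * s) := by
  rw [mul_sub, mul_one, ← mul_assoc, ← zpow_add₀ hq,
    show 2 * (b + s) - m + 1 + (-(2 * b) + m - 1) = 2 * s by ring]
  ring

theorem neg_zpow_mul_one_sub_zpow :
    -q ^ (2 * s - m + 1) * (1 - q ^ (2 * b)) =
      q ^ (2 * (b + s) - m + 1) - q ^ (2 * s - m + 1) := by
  rw [neg_mul, mul_sub, mul_one, ← zpow_add₀ hq,
    show 2 * s - m + 1 + 2 * b = 2 * (b + s) - m + 1 by ring, neg_sub]

theorem neg_zpow_mul_mul_one_sub_zpow :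
    -q ^ (2 * s) * z * (1 - q ^ (2 * b)) = z * q ^ (2 * (b + s)) - z * q ^ (2 * s) := by
  rw [neg_mul, neg_mul, mul_sub, mul_one, mul_comm _ z, mul_assoc, ← zpow_add₀ hq,
    show 2 * s + 2 * b = 2 * (b + s) by ring, neg_sub]

end Weights

section ColumnSum

variable {K : Type*} [Field K] {n : ℕ}

/-- The weight `S(z)_{ε_j,β}^{ε_k,δ}` of formula (25), with `b i = β_i`. -/
def sWeight (q z : K) (m : ℕ) (b : Fin (n + 1) → ℤ) (j k : Fin (n + 1)) : K :=
  if k = j then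
    q ^ (2 * (∑ i ∈ Ici j, b i) - m + 1) * (1 - q ^ (-(2 * b j) + m - 1) * z) /
      (q ^ (m + 1) - z)
  else if k < j then
    -q ^ (2 * (∑ i ∈ Ioi k, b i) - m + 1) * (1 - q ^ (2 * b k)) / (q ^ (m + 1) - z)
  else
    -q ^ (2 * (∑ i ∈ Ioi k, b i)) * z * (1 - q ^ (2 * b k)) / (q ^ (m + 1) - z)

def columnPotential (q z : K) (m j : ℕ) (S : ℕ → ℤ) (k : ℕ) : K :=
  if k ≤ j then q ^ (2 * S k - m + 1) else z * q ^ (2 * S k)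

variable {q : K} (hq : q ≠ 0) (z : K) (m : ℕ) (b : Fin (n + 1) → ℤ) (j : Fin (n + 1))
include hq

theorem sWeight_eq_columnPotential_sub (k : Fin (n + 1)) :
    sWeight q z m b j k =
      (columnPotential q z m j (Fin.tailSum b) k -
        columnPotential q z m j (Fin.tailSum b) (k + 1)) / (q ^ (m + 1) - z) := by
  have hsucc := Fin.tailSum_eq_add_tailSum_succ b k
  unfold sWeight columnPotential
  rcases lt_trichotomy k j with hlt | rfl | hgt
  · have hkj : (k : ℕ) + 1 ≤ j := hlt
    rw [if_neg hlt.ne, if_pos hlt, if_pos hkj, if_pos (by omega), Fin.sum_Ioi_eq_tailSum, hsucc,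
      neg_zpow_mul_one_sub_zpow hq]
  · rw [if_pos rfl, if_pos le_rfl, if_neg (Nat.not_succ_le_self _), Fin.sum_Ici_eq_tailSum, hsucc,
      zpow_mul_one_sub_zpow_neg_mul hq]
  · have hjk : (j : ℕ) < k := hgt
    rw [if_neg hgt.ne', if_neg (not_lt.mpr hgt.le), if_neg (by omega), if_neg (by omega),
      Fin.sum_Ioi_eq_tailSum, hsucc, neg_zpow_mul_mul_one_sub_zpow hq]

theorem sum_sWeight (hb : ∑ i, b i = m) (h : q ^ (m + 1) ≠ z) :
    ∑ k, sWeight q z m b j k = 1 := by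
  set F := columnPotential q z m j (Fin.tailSum b) with hF
  have hF0 : F 0 = q ^ (m + 1) := by
    rw [hF, columnPotential, if_pos (Nat.zero_le _), Fin.tailSum_zero, hb,
      show 2 * (m : ℤ) - m + 1 = (m + 1 : ℕ) by push_cast; ring, zpow_natCast]
  have hFtop : F (n + 1) = z := by
    rw [hF, columnPotential, if_neg (by omega), Fin.tailSum_of_le b le_rfl, mul_zero, zpow_zero,
      mul_one]
  rw [sum_congr rfl fun k _ => sWeight_eq_columnPotential_sub hq z m b j k, ← sum_div,
    Fin.sum_univ_eq_sum_range (fun k => F k - F (k + 1)), sum_range_sub', hF0, hFtop,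
    div_self (sub_ne_zero.mpr h)]

end ColumnSum

theorem l_eq_one_S_matrix_column_sum_general (n m : ℕ)
    (β : Fin (n + 1) → ℕ) (hβ : ∑ i, β i = m) (j : Fin (n + 1))
    (q z : ℂ) (hq : q ≠ 0) (h : q ^ (m + 1) ≠ z) :
    (∑ k : Fin (n + 1),
      if k = j then
        q ^ (2 * (∑ i ∈ Finset.Ici j, (β i : ℤ)) - m + 1) *
          (1 - q ^ (-(2 * (β j : ℤ)) + m - 1) * z) / (q ^ (m + 1) - z)
      else if k < j then
        -q ^ (2 * (∑ i ∈ Finset.Ioi k, (β i : ℤ)) - m + 1) *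
          (1 - q ^ (2 * (β k : ℤ))) / (q ^ (m + 1) - z)
      else
        -q ^ (2 * (∑ i ∈ Finset.Ioi k, (β i : ℤ))) * z *
          (1 - q ^ (2 * (β k : ℤ))) / (q ^ (m + 1) - z)) = 1 :=
  sum_sWeight hq z m (fun i => (β i : ℤ)) j (by exact_mod_cast hβ) h

/-- For the `l = 1` stochastic `S`-matrix weights given by formula (25), the
column sums equal `1`: for fixed input `(ε_j, β)` with `β_0 + ⋯ + β_n = m`, the
sum over outputs `k` of the weight `S(z)_{ε_j,β}^{ε_k,δ}` equals `1`. -/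
theorem l_eq_one_S_matrix_column_sum (n m : ℕ) (hn : 1 ≤ n) (hm : 1 ≤ m)
    (β : Fin (n + 1) → ℕ) (hβ : ∑ i, β i = m) (j : Fin (n + 1))
    (q z : ℂ) (hq : q ≠ 0) (h : q ^ (m + 1) ≠ z) :
    (∑ k : Fin (n + 1),
      if k = j then
        q ^ (2 * (∑ i ∈ Finset.Ici j, (β i : ℤ)) - m + 1) *
          (1 - q ^ (-(2 * (β j : ℤ)) + m - 1) * z) / (q ^ (m + 1) - z)
      else if k < j then
        -q ^ (2 * (∑ i ∈ Finset.Ioi k, (β i : ℤ)) - m + 1) *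
          (1 - q ^ (2 * (β k : ℤ))) / (q ^ (m + 1) - z)
      else
        -q ^ (2 * (∑ i ∈ Finset.Ioi k, (β i : ℤ))) * z *
          (1 - q ^ (2 * (β k : ℤ))) / (q ^ (m + 1) - z)) = 1 :=
  l_eq_one_S_matrix_column_sum_general n m β hβ j q z hq h
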